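/- arXiv:1607.07128 — 4 statements merged into one kernel-verified Lean document; each statement's English description precedes it below -/
import Mathlib

section
/- Let I, J, R be positive integers. The set of pairs (X, Y) ∈ ℝ^{I×R} × ℝ^{J×R} for which the Khatri–Rao product Y ⊙ X does not have rank equal to min(IJ, R) has Lebesgue measure zero in ℝ^{I×R} × ℝ^{J×R}. In other words, for generic X and Y, rank(Y ⊙ X) = min(IJ, R). -/
/-- The Khatri–Rao (columnwise Kronecker) product: for `A : α × γ` and `B : β × γ`
matrices, `(khatriRao A B) (i, j) r = A i r * B j r`, i.e. the `r`-th column of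
`khatriRao A B` is the Kronecker product of the `r`-th columns of `A` and `B`. -/
def khatriRao {α β γ : Type*} (A : Matrix α γ ℝ) (B : Matrix β γ ℝ) :
    Matrix (α × β) γ ℝ :=
  Matrix.of fun p r => A p.1 r * B p.2 r

/-!
The rank of `Y ⊙ X` never exceeds `m = min (IJ) R`, and it equals `m` wherever a fixed
`m × m` minor does not vanish. That minor is a polynomial in the entries of `X` and `Y`, and
it is not the zero polynomial: for `X i r = (r + 1) ^ i` and `Y j r = (r + 1) ^ (I j)` the row
`(j, i)` of `Y ⊙ X` is `((r + 1) ^ (I j + i))_r`, so the minor is a Vandermonde determinant.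
Finally, the zero set of a nonzero real polynomial is Lebesgue-null: by Fubini, slicing along
one variable gives finitely many roots off the zero set of the leading coefficient.
-/

open MeasureTheory MvPolynomial

theorem MeasureTheory.volume_measurePreserving_curry (ι κ X : Type*) [Fintype ι] [Fintype κ]
    [MeasureSpace X] [SigmaFinite (volume : Measure X)] :
    MeasurePreserving (MeasurableEquiv.curry ι κ X) volume volume := by
  refine MeasurePreserving.symm (MeasurableEquiv.curry ι κ X).symm
    ⟨MeasurableEquiv.measurable _, (Measure.pi_eq fun s hs => ?_).symm⟩
  have hbox : (MeasurableEquiv.curry ι κ X).symm ⁻¹' Set.univ.pi s =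
      Set.univ.pi fun i => Set.univ.pi fun k => s (i, k) := by
    ext f
    simp
  rw [Measure.map_apply (MeasurableEquiv.measurable _) (.univ_pi hs), hbox, volume_pi_pi,
    Fintype.prod_prod_type]
  simp_rw [volume_pi_pi]

theorem MvPolynomial.finite_setOf_eval_cons_eq_zero {K : Type*} [CommRing K] [IsDomain K]
    {n : ℕ} (p : MvPolynomial (Fin (n + 1)) K) {s : Fin n → K}
    (hs : eval s (finSuccEquiv K n p).leadingCoeff ≠ 0) :
    {y : K | eval (Fin.cons y s) p = 0}.Finite := by
  have hmap : (finSuccEquiv K n p).map (eval s) ≠ 0 := by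
    rw [← Polynomial.leadingCoeff_ne_zero,
      Polynomial.leadingCoeff_map_of_leadingCoeff_ne_zero _ hs]
    exact hs
  simpa only [Polynomial.IsRoot.def, eval_eq_eval_mv_eval'] using
    Polynomial.finite_setOfPred_isRoot hmap

theorem MvPolynomial.volume_setOf_eval_eq_zero_fin :
    ∀ {n : ℕ} {p : MvPolynomial (Fin n) ℝ}, p ≠ 0 → volume {x | eval x p = 0} = 0
  | 0, p, hp => by
    obtain ⟨c, rfl⟩ := C_surjective (Fin 0) p
    simp_all
  | n + 1, p, hp => by
    have hlc : ∀ᵐ s : Fin n → ℝ, eval s (finSuccEquiv ℝ n p).leadingCoeff ≠ 0 := by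
      rw [ae_iff]
      simpa using volume_setOf_eval_eq_zero_fin (p := (finSuccEquiv ℝ n p).leadingCoeff)
        (by simpa using hp)
    let e := MeasurableEquiv.piFinSuccAbove (fun _ : Fin (n + 1) => ℝ) 0
    have he : MeasurePreserving e.symm volume volume :=
      (volume_preserving_piFinSuccAbove _ 0).symm _
    have he_apply (y : ℝ) (s : Fin n → ℝ) : e.symm (y, s) = Fin.cons y s := by
      simp [e, Fin.consEquiv]
    have hA : MeasurableSet {x | eval x p = 0} :=
      (isClosed_eq (continuous_eval p) continuous_const).measurableSet
    rw [← he.measure_preimage_equiv, Measure.volume_eq_prod,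
      Measure.prod_apply_symm (e.symm.measurable hA)]
    refine (lintegral_congr_ae ?_).trans lintegral_zero
    filter_upwards [hlc] with s hs
    simpa [Set.preimage, he_apply] using
      (finite_setOf_eval_cons_eq_zero p hs).measure_zero volume

theorem MvPolynomial.volume_setOf_eval_eq_zero {σ : Type*} [Fintype σ] {p : MvPolynomial σ ℝ}
    (hp : p ≠ 0) : volume {x : σ → ℝ | eval x p = 0} = 0 := by
  let e := Fintype.equivFin σ
  have he := volume_measurePreserving_piCongrLeft (fun _ => ℝ) e
  have hpre : MeasurableEquiv.piCongrLeft (fun _ => ℝ) e ⁻¹' {y | eval y (rename e p) = 0} =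
      {x | eval x p = 0} := by
    ext x
    have hx : MeasurableEquiv.piCongrLeft (fun _ => ℝ) e x ∘ e = x :=
      _root_.funext (Equiv.piCongrLeft_apply_apply (fun _ => ℝ) e x)
    simp only [Set.mem_preimage, Set.mem_ofPred_eq, eval_rename, hx]
  rw [← hpre, he.measure_preimage_equiv]
  exact volume_setOf_eval_eq_zero_fin
    ((rename_injective _ e.injective).ne_iff' (map_zero _) |>.mpr hp)

theorem Matrix.card_le_rank_of_det_submatrix_ne_zero {K m n κ : Type*} [Field K] [Fintype n]
    [Fintype κ] [DecidableEq κ] (A : Matrix m n K) (r : κ → m) (c : κ → n)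
    (h : (A.submatrix r c).det ≠ 0) : Fintype.card κ ≤ A.rank := by
  have := A.rank_submatrix_le r c
  rwa [rank_of_isUnit _ ((isUnit_iff_isUnit_det _).mpr h.isUnit)] at this

theorem MvPolynomial.ae_card_le_rank_map_eval {σ m n κ : Type*} [Fintype σ] [Fintype n]
    [Fintype κ] [DecidableEq κ] (M : Matrix m n (MvPolynomial σ ℝ)) (r : κ → m) (c : κ → n)
    (x₀ : σ → ℝ) (h₀ : ((M.map (eval x₀)).submatrix r c).det ≠ 0) :
    ∀ᵐ x : σ → ℝ, Fintype.card κ ≤ (M.map (eval x)).rank := by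
  have hdet (x : σ → ℝ) :
      ((M.map (eval x)).submatrix r c).det = eval x (M.submatrix r c).det := by
    rw [RingHom.map_det]
    rfl
  have hq : (M.submatrix r c).det ≠ 0 := fun h => h₀ (by rw [hdet, h, map_zero])
  rw [ae_iff]
  refine measure_mono_null (fun x hx => ?_) (volume_setOf_eval_eq_zero hq)
  by_contra h
  exact hx ((M.map (eval x)).card_le_rank_of_det_submatrix_ne_zero r c (by rwa [hdet]))

theorem khatriRao_rank_le {α β γ : Type*} [Fintype α] [Fintype β] [Fintype γ]
    (A : Matrix α γ ℝ) (B : Matrix β γ ℝ) :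
    (khatriRao A B).rank ≤ min (Fintype.card α * Fintype.card β) (Fintype.card γ) :=
  le_min ((Matrix.rank_le_card_height _).trans_eq (Fintype.card_prod _ _))
    (Matrix.rank_le_card_width _)

noncomputable def genericKhatriRao (α β γ : Type*) :
    Matrix (α × β) γ (MvPolynomial ((α × γ) ⊕ (β × γ)) ℝ) :=
  Matrix.of fun p r => X (Sum.inl (p.1, r)) * X (Sum.inr (p.2, r))

theorem genericKhatriRao_map_eval {α β γ : Type*} (x : (α × γ) ⊕ (β × γ) → ℝ) :
    (genericKhatriRao α β γ).map (eval x) =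
      khatriRao (Matrix.of fun a r => x (Sum.inl (a, r)))
        (Matrix.of fun b r => x (Sum.inr (b, r))) := by
  ext p r
  simp [genericKhatriRao, khatriRao]

theorem khatriRao_pow_submatrix {γ : Type*} {I J m : ℕ} (v : γ → ℝ) (hm : m ≤ J * I)
    (c : Fin m → γ) :
    (khatriRao (Matrix.of fun (j : Fin J) r => v r ^ (I * j : ℕ))
      (Matrix.of fun (i : Fin I) r => v r ^ (i : ℕ))).submatrix
        (finProdFinEquiv.symm ∘ Fin.castLE hm) c = (Matrix.vandermonde (v ∘ c)).transpose := by
  ext k l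
  have hk := congrArg Fin.val (finProdFinEquiv.apply_symm_apply (Fin.castLE hm k))
  rw [Fin.val_castLE] at hk
  simp only [khatriRao, Matrix.submatrix_apply, Function.comp_apply, Matrix.of_apply,
    Matrix.transpose_apply, Matrix.vandermonde_apply]
  rw [← pow_add, ← hk, finProdFinEquiv_apply_val, add_comm]

theorem ae_min_le_rank_genericKhatriRao (I J R : ℕ) :
    ∀ᵐ x, min (I * J) R ≤ ((genericKhatriRao (Fin J) (Fin I) (Fin R)).map (eval x)).rank := by
  have hmJI : min (I * J) R ≤ J * I := (min_le_left _ _).trans_eq (mul_comm I J)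
  have hmR : min (I * J) R ≤ R := min_le_right _ _
  let v : Fin R → ℝ := fun r => r + 1
  let x₀ : (Fin J × Fin R) ⊕ (Fin I × Fin R) → ℝ :=
    Sum.elim (fun jr => v jr.2 ^ (I * jr.1 : ℕ)) (fun ir => v ir.2 ^ (ir.1 : ℕ))
  have hx₀ : (genericKhatriRao (Fin J) (Fin I) (Fin R)).map (eval x₀) =
      khatriRao (Matrix.of fun (j : Fin J) r => v r ^ (I * j : ℕ))
        (Matrix.of fun (i : Fin I) r => v r ^ (i : ℕ)) :=
    genericKhatriRao_map_eval x₀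
  have h₀ : (((genericKhatriRao _ _ _).map (eval x₀)).submatrix
      (finProdFinEquiv.symm ∘ Fin.castLE hmJI) (Fin.castLE hmR)).det ≠ 0 := by
    rw [hx₀, khatriRao_pow_submatrix, Matrix.det_transpose, Matrix.det_vandermonde_ne_zero_iff]
    exact fun a b h => Fin.castLE_injective hmR (Fin.ext (by simpa [v] using h))
  simpa using ae_card_le_rank_map_eval _ _ _ x₀ h₀

theorem khatriRao_generic_rank_general (I J R : ℕ) :
    MeasureTheory.volume
      {p : (Fin I → Fin R → ℝ) × (Fin J → Fin R → ℝ) |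
        (khatriRao (Matrix.of p.2) (Matrix.of p.1)).rank ≠ min (I * J) R} = 0 := by
  let Φ : ((Fin J × Fin R) ⊕ (Fin I × Fin R) → ℝ) ≃ᵐ
      (Fin I → Fin R → ℝ) × (Fin J → Fin R → ℝ) :=
    (MeasurableEquiv.sumPiEquivProdPi fun _ => ℝ).trans
      (((MeasurableEquiv.curry _ _ ℝ).prodCongr (MeasurableEquiv.curry _ _ ℝ)).trans .prodComm)
  have hΦ : MeasurePreserving Φ volume volume :=
    Measure.measurePreserving_swap.comp
      (((volume_measurePreserving_curry _ _ ℝ).prod (volume_measurePreserving_curry _ _ ℝ)).comp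
        (volume_measurePreserving_sumPiEquivProdPi _))
  have hgeneric := ae_min_le_rank_genericKhatriRao I J R
  rw [ae_iff] at hgeneric
  rw [← hΦ.measure_preimage_equiv]
  refine measure_mono_null ?_ hgeneric
  intro x hbad hle
  rw [genericKhatriRao_map_eval] at hle
  have hupper := khatriRao_rank_le (Matrix.of (Φ x).2) (Matrix.of (Φ x).1)
  exact hbad (le_antisymm (by simpa [mul_comm J I] using hupper) hle)

/-- For generic `X ∈ ℝ^{I×R}` and `Y ∈ ℝ^{J×R}`, the Khatri–Rao product
`Y ⊙ X` has rank `min (I*J) R`: the set of pairs `(X, Y)` where this fails has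
Lebesgue measure zero. -/
theorem khatriRao_generic_rank (I J R : ℕ) (hI : 0 < I) (hJ : 0 < J) (hR : 0 < R) :
    MeasureTheory.volume
      {p : (Fin I → Fin R → ℝ) × (Fin J → Fin R → ℝ) |
        (khatriRao (Matrix.of p.2) (Matrix.of p.1)).rank ≠ min (I * J) R} = 0 :=
  khatriRao_generic_rank_general I J R
end

section
/- Let I, J, K, R be positive integers with I, J, K ≥ 2, and let ℓ = IJK − I − J − K + 2. Define Φ : ℝ^I × ℝ^J × ℝ^K → ℝ^ℓ by writing x = (x₁, x₂) with x₁ ∈ ℝ, x₂ ∈ ℝ^{I−1}, y = (y₁, y₂) with y₂ ∈ ℝ^{J−1}, z = (z₁, z₂) with z₂ ∈ ℝ^{K−1}, and setting Φ(x, y, z) to be the concatenation of the four blocks z₁·(y₂ ⊗ x₂) ∈ ℝ^{(J−1)(I−1)}, x₁·(z₂ ⊗ y₂) ∈ ℝ^{(K−1)(J−1)}, y₁·(z₂ ⊗ x₂) ∈ ℝ^{(K−1)(I−1)}, and z₂ ⊗ y₂ ⊗ x₂ ∈ ℝ^{(K−1)(J−1)(I−1)}. Then the set of triples of matrices (X,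 Y, Z) ∈ ℝ^{I×R} × ℝ^{J×R} × ℝ^{K×R}, with columns x_r, y_r, z_r, for which the ℓ × R matrix [Φ(x₁,y₁,z₁), …, Φ(x_R,y_R,z_R)] does not have rank min(ℓ, R) has Lebesgue measure zero. -/
/-!
Every coordinate of `Φ` is a monomial `x_i y_j z_k`, and distinct coordinates give distinct
monomials. So the `ℓ × R` matrix `M` is a polynomial matrix in the entries of `(X, Y, Z)`, and it
has rank `min ℓ R` wherever the Gram determinant `det (Mᵀ M)` (or `det (M Mᵀ)`) is nonzero.
That determinant is a nonzero polynomial: choosing each `(x_r, y_r, z_r)` as a triple of standard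
basis vectors turns `M` into a 0/1 matrix of full rank. The zero set of a nonzero polynomial is
Lebesgue-null, by induction on the number of variables and Fubini, since a nonzero one-variable
polynomial has finitely many roots.
-/

/-- The map `Φ : ℝ^I × ℝ^J × ℝ^K → ℝ^{IJK-I-J-K+2}` of Lemma 2.2(ii): writing
`x = (x₁, x₂)`, `y = (y₁, y₂)`, `z = (z₁, z₂)` with `x₂ ∈ ℝ^{I-1}`, `y₂ ∈ ℝ^{J-1}`,
`z₂ ∈ ℝ^{K-1}`, its four blocks are `z₁·(y₂ ⊗ x₂)`, `x₁·(z₂ ⊗ y₂)`, `y₁·(z₂ ⊗ x₂)`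
and `z₂ ⊗ y₂ ⊗ x₂`.  The codomain is indexed by a sum type of cardinality
`(J-1)(I-1) + (K-1)(J-1) + (K-1)(I-1) + (K-1)(J-1)(I-1) = IJK - I - J - K + 2`. -/
def PhiMap (I J K : ℕ) (hI : 2 ≤ I) (hJ : 2 ≤ J) (hK : 2 ≤ K)
    (x : Fin I → ℝ) (y : Fin J → ℝ) (z : Fin K → ℝ) :
    ((Fin (J - 1) × Fin (I - 1)) ⊕
      ((Fin (K - 1) × Fin (J - 1)) ⊕
        ((Fin (K - 1) × Fin (I - 1)) ⊕ (Fin (K - 1) × Fin (J - 1) × Fin (I - 1))))) → ℝ :=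
  fun idx =>
    match idx with
    | Sum.inl (j, i) =>
        z ⟨0, by omega⟩ *
          (y ⟨j.val + 1, by have := j.isLt; omega⟩ * x ⟨i.val + 1, by have := i.isLt; omega⟩)
    | Sum.inr (Sum.inl (k, j)) =>
        x ⟨0, by omega⟩ *
          (z ⟨k.val + 1, by have := k.isLt; omega⟩ * y ⟨j.val + 1, by have := j.isLt; omega⟩)
    | Sum.inr (Sum.inr (Sum.inl (k, i))) =>
        y ⟨0, by omega⟩ *
          (z ⟨k.val + 1, by have := k.isLt; omega⟩ * x ⟨i.val + 1, by have := i.isLt; omega⟩)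
    | Sum.inr (Sum.inr (Sum.inr (k, j, i))) =>
        z ⟨k.val + 1, by have := k.isLt; omega⟩ *
          (y ⟨j.val + 1, by have := j.isLt; omega⟩ * x ⟨i.val + 1, by have := i.isLt; omega⟩)

open MeasureTheory

theorem Matrix.rank_eq_card_iff_det_ne_zero {n K : Type*} [Fintype n] [DecidableEq n] [Field K]
    (A : Matrix n n K) : A.rank = Fintype.card n ↔ A.det ≠ 0 := by
  refine ⟨fun h => ?_, Matrix.rank_of_det_ne_zero⟩
  have hrange : LinearMap.range A.mulVecLin = ⊤ :=
    Submodule.eq_top_of_finrank_eq (by rw [Module.finrank_fintype_fun_eq_card]; exact h)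
  have hunit : IsUnit A :=
    Matrix.mulVec_surjective_iff_isUnit.mp (LinearMap.range_eq_top.mp hrange)
  exact ((Matrix.isUnit_iff_isUnit_det A).mp hunit).ne_zero

theorem MeasureTheory.Measure.addHaar_preimage_linearEquiv_eq_zero {E F : Type*}
    [NormedAddCommGroup E] [NormedSpace ℝ E] [FiniteDimensional ℝ E] [MeasurableSpace E]
    [BorelSpace E] [NormedAddCommGroup F] [NormedSpace ℝ F] [FiniteDimensional ℝ F]
    [MeasurableSpace F] [BorelSpace F] (μ : Measure E) [μ.IsAddHaarMeasure] (ν : Measure F)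
    [ν.IsAddHaarMeasure] (e : E ≃ₗ[ℝ] F) {s : Set F} (hs : ν s = 0) : μ (e ⁻¹' s) = 0 := by
  have hac : μ.map e ≪ ν := Measure.absolutelyContinuous_isAddHaarMeasure _ _
  exact (e.toContinuousLinearEquiv.toHomeomorph.toMeasurableEquiv.map_apply s).symm.trans (hac hs)

theorem MvPolynomial.volume_setOf_eval_eq_zero_s3 {n : ℕ} {p : MvPolynomial (Fin n) ℝ}
    (hp : p ≠ 0) : volume {u | eval u p = 0} = 0 := by
  induction n with
  | zero =>
    obtain ⟨u₀, hu₀⟩ : ∃ u, eval u p ≠ 0 := by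
      by_contra! h
      exact hp (MvPolynomial.funext fun u => by simp [h u])
    convert measure_empty (μ := volume)
    exact Set.eq_empty_of_forall_notMem fun u hu => hu₀ (Subsingleton.elim u₀ u ▸ hu)
  | succ n ih =>
    set q := finSuccEquiv ℝ n p
    obtain ⟨i, hi⟩ : ∃ i, q.coeff i ≠ 0 := by
      by_contra! h
      have hq : q = 0 := Polynomial.ext fun i => by simp [h i]
      exact hp ((map_eq_zero_iff _ (finSuccEquiv ℝ n).injective).mp hq)
    have hslice : ∀ s : Fin n → ℝ, eval s (q.coeff i) ≠ 0 →
        volume {a : ℝ | eval (Fin.cons a s : Fin (n + 1) → ℝ) p = 0} = 0 := by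
      intro s hs
      have hqs : q.map (eval s) ≠ 0 := fun h => hs (by simpa using congrArg (·.coeff i) h)
      simp_rw [eval_eq_eval_mv_eval']
      exact (Polynomial.finite_setOfPred_isRoot hqs).measure_zero _
    set S : Set (ℝ × (Fin n → ℝ)) := {x | eval (Fin.cons x.1 x.2 : Fin (n + 1) → ℝ) p = 0}
    have hS : MeasurableSet S := by
      refine (isClosed_eq ((continuous_eval p).comp ?_) continuous_const).measurableSet
      exact Continuous.finCons (A := fun _ => ℝ) continuous_fst continuous_snd
    have hpre : {u : Fin (n + 1) → ℝ | eval u p = 0} =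
        MeasurableEquiv.piFinSuccAbove (fun _ => ℝ) 0 ⁻¹' S := by
      ext u; simp [S, Fin.cons_self_tail]
    rw [hpre, (volume_preserving_piFinSuccAbove (fun _ => ℝ) 0).measure_preimage
      hS.nullMeasurableSet, Measure.volume_eq_prod, Measure.prod_apply_symm hS]
    refine (lintegral_congr_ae ?_).trans lintegral_zero
    filter_upwards [measure_eq_zero_iff_ae_notMem.mp (ih hi)] with s hs
    exact hslice s hs

theorem MvPolynomial.addHaar_setOf_eval_eq_zero {E σ : Type*} [Fintype σ]
    [NormedAddCommGroup E] [NormedSpace ℝ E] [FiniteDimensional ℝ E] [MeasurableSpace E]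
    [BorelSpace E] (μ : Measure E) [μ.IsAddHaarMeasure] (e : E ≃ₗ[ℝ] (σ → ℝ))
    {p : MvPolynomial σ ℝ} (hp : p ≠ 0) : μ {x | eval (e x) p = 0} = 0 := by
  set c := Fintype.equivFin σ
  have hq : rename c p ≠ 0 := (map_ne_zero_iff _ (rename_injective _ c.injective)).mpr hp
  have hset : {x | eval (e x) p = 0} =
      (e.trans (LinearEquiv.funCongrLeft ℝ ℝ c.symm)) ⁻¹' {v | eval v (rename c p) = 0} := by
    ext x
    simp [eval_rename, Function.comp_def, LinearEquiv.funCongrLeft_apply]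
  rw [hset]
  exact Measure.addHaar_preimage_linearEquiv_eq_zero μ volume _ (volume_setOf_eval_eq_zero_s3 hq)

namespace Matrix

variable {E σ m n : Type*} [Fintype σ] [Fintype m] [Fintype n] [DecidableEq n]
  [NormedAddCommGroup E] [NormedSpace ℝ E] [FiniteDimensional ℝ E] [MeasurableSpace E]
  [BorelSpace E] (μ : Measure E) [μ.IsAddHaarMeasure] (e : E ≃ₗ[ℝ] (σ → ℝ))

theorem addHaar_setOf_rank_map_eval_ne_card_width (M : Matrix m n (MvPolynomial σ ℝ)) (x₀ : E)
    (h₀ : (M.map (MvPolynomial.eval (e x₀))).rank = Fintype.card n) :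
    μ {x | (M.map (MvPolynomial.eval (e x))).rank ≠ Fintype.card n} = 0 := by
  have hgram (u : σ → ℝ) : MvPolynomial.eval u (Mᵀ * M).det =
      ((M.map (MvPolynomial.eval u))ᵀ * M.map (MvPolynomial.eval u)).det := by
    rw [RingHom.map_det, RingHom.mapMatrix_apply, Matrix.map_mul, Matrix.transpose_map]
  have hrank (u : σ → ℝ) : (M.map (MvPolynomial.eval u)).rank = Fintype.card n ↔
      MvPolynomial.eval u (Mᵀ * M).det ≠ 0 := by
    rw [hgram, ← rank_eq_card_iff_det_ne_zero, rank_transpose_mul_self]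
  have hP : (Mᵀ * M).det ≠ 0 := fun h => (hrank _).mp h₀ (by rw [h, map_zero])
  refine measure_mono_null (fun x hx => ?_) (MvPolynomial.addHaar_setOf_eval_eq_zero μ e hP)
  by_contra h
  exact hx ((hrank _).mpr h)

theorem addHaar_setOf_rank_map_eval_ne_min [DecidableEq m] (M : Matrix m n (MvPolynomial σ ℝ))
    (x₀ : E)
    (h₀ : (M.map (MvPolynomial.eval (e x₀))).rank = min (Fintype.card m) (Fintype.card n)) :
    μ {x | (M.map (MvPolynomial.eval (e x))).rank ≠ min (Fintype.card m) (Fintype.card n)} = 0 := by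
  rcases le_total (Fintype.card n) (Fintype.card m) with h | h
  · rw [min_eq_right h] at h₀ ⊢
    exact addHaar_setOf_rank_map_eval_ne_card_width μ e M x₀ h₀
  · rw [min_eq_left h] at h₀ ⊢
    simp_rw [← rank_transpose (M.map _), ← transpose_map] at h₀ ⊢
    exact addHaar_setOf_rank_map_eval_ne_card_width μ e Mᵀ x₀ h₀

theorem card_le_rank_one_submatrix {K β ρ κ : Type*} [Field K] [Fintype β] [DecidableEq β]
    [Fintype ρ] [Fintype κ] {g : ρ → β} {c : κ → ρ} (hc : Function.Injective (g ∘ c)) :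
    Fintype.card κ ≤ ((1 : Matrix β β K).submatrix id g).rank := by
  classical
  calc Fintype.card κ = (1 : Matrix κ κ K).rank := rank_one.symm
    _ = (((1 : Matrix β β K).submatrix id g).submatrix (g ∘ c) c).rank := by
      rw [submatrix_submatrix, Function.id_comp, submatrix_one _ hc]
    _ ≤ _ := rank_submatrix_le _ _ _

theorem exists_rank_one_submatrix_eq_min (K : Type*) {β ρ : Type*} [Field K] [Fintype β]
    [DecidableEq β] [Nonempty β] [Fintype ρ] :
    ∃ g : ρ → β, ((1 : Matrix β β K).submatrix id g).rank =
      min (Fintype.card β) (Fintype.card ρ) := by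
  have hle (g : ρ → β) : ((1 : Matrix β β K).submatrix id g).rank ≤
      min (Fintype.card β) (Fintype.card ρ) :=
    le_min (rank_le_card_height _) (rank_le_card_width _)
  rcases le_total (Fintype.card ρ) (Fintype.card β) with h | h
  · obtain ⟨g⟩ := Function.Embedding.nonempty_of_card_le h
    refine ⟨g, (hle g).antisymm ?_⟩
    rw [min_eq_right h]
    exact card_le_rank_one_submatrix (c := id) g.injective
  · obtain ⟨c⟩ := Function.Embedding.nonempty_of_card_le h
    refine ⟨Function.invFun c, (hle _).antisymm ?_⟩
    rw [min_eq_left h]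
    refine card_le_rank_one_submatrix (c := c) ?_
    rw [Function.invFun_comp c.injective]
    exact Function.injective_id

end Matrix

section TrilinearMonomials

variable {ι₁ ι₂ ι₃ ρ : Type*}

def tripleCoords (ι₁ ι₂ ι₃ ρ : Type*) :
    ((ι₁ → ρ → ℝ) × (ι₂ → ρ → ℝ) × (ι₃ → ρ → ℝ)) ≃ₗ[ℝ]
      ((ι₁ × ρ) ⊕ (ι₂ × ρ) ⊕ (ι₃ × ρ) → ℝ) :=
  ((LinearEquiv.curry ℝ ℝ _ _).symm.prodCongr
      ((LinearEquiv.curry ℝ ℝ _ _).symm.prodCongr (LinearEquiv.curry ℝ ℝ _ _).symm)).trans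
    (((LinearEquiv.refl ℝ _).prodCongr (LinearEquiv.sumArrowLequivProdArrow _ _ ℝ ℝ).symm).trans
      (LinearEquiv.sumArrowLequivProdArrow _ _ ℝ ℝ).symm)

open MvPolynomial in
noncomputable def trilinearMonomialMatrix {β : Type*} (f : β → ι₁ × ι₂ × ι₃) (ρ : Type*) :
    Matrix β ρ (MvPolynomial ((ι₁ × ρ) ⊕ (ι₂ × ρ) ⊕ (ι₃ × ρ)) ℝ) :=
  Matrix.of fun b r =>
    X (.inl ((f b).1, r)) * X (.inr (.inl ((f b).2.1, r))) * X (.inr (.inr ((f b).2.2, r)))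

theorem trilinearMonomialMatrix_map_eval {β : Type*} (f : β → ι₁ × ι₂ × ι₃)
    (t : (ι₁ → ρ → ℝ) × (ι₂ → ρ → ℝ) × (ι₃ → ρ → ℝ)) :
    (trilinearMonomialMatrix f ρ).map (MvPolynomial.eval (tripleCoords ι₁ ι₂ ι₃ ρ t)) =
      Matrix.of fun b r => t.1 (f b).1 r * t.2.1 (f b).2.1 r * t.2.2 (f b).2.2 r := by
  ext b r
  simp [trilinearMonomialMatrix, tripleCoords]

theorem exists_trilinearMonomialMatrix_map_eval_eq_one_submatrix {β : Type*} [DecidableEq β]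
    {f : β → ι₁ × ι₂ × ι₃} (hf : Function.Injective f) (g : ρ → β) :
    ∃ t, (trilinearMonomialMatrix f ρ).map (MvPolynomial.eval (tripleCoords ι₁ ι₂ ι₃ ρ t)) =
      (1 : Matrix β β ℝ).submatrix id g := by
  classical
  refine ⟨(fun i r => if i = (f (g r)).1 then 1 else 0,
    fun j r => if j = (f (g r)).2.1 then 1 else 0, fun k r => if k = (f (g r)).2.2 then 1 else 0),
    ?_⟩
  rw [trilinearMonomialMatrix_map_eval]
  ext b r
  simp only [Matrix.of_apply, Matrix.submatrix_apply, id, Matrix.one_apply, ← hf.eq_iff,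
    Prod.ext_iff]
  split_ifs <;> simp_all

end TrilinearMonomials

theorem volume_setOf_rank_trilinearMonomial_ne_min {ι₁ ι₂ ι₃ β ρ : Type*} [Fintype ι₁]
    [Fintype ι₂] [Fintype ι₃] [Fintype β] [Nonempty β] [Fintype ρ] {f : β → ι₁ × ι₂ × ι₃}
    (hf : Function.Injective f) :
    volume {t : (ι₁ → ρ → ℝ) × (ι₂ → ρ → ℝ) × (ι₃ → ρ → ℝ) |
      (Matrix.of fun b r => t.1 (f b).1 r * t.2.1 (f b).2.1 r * t.2.2 (f b).2.2 r).rank ≠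
        min (Fintype.card β) (Fintype.card ρ)} = 0 := by
  classical
  -- instance search does not see through `volume` on iterated function spaces and products
  have : (volume : Measure (ι₁ → ρ → ℝ)).IsAddHaarMeasure := Measure.pi.isAddHaarMeasure _
  have : (volume : Measure (ι₂ → ρ → ℝ)).IsAddHaarMeasure := Measure.pi.isAddHaarMeasure _
  have : (volume : Measure (ι₃ → ρ → ℝ)).IsAddHaarMeasure := Measure.pi.isAddHaarMeasure _
  have : (volume : Measure ((ι₂ → ρ → ℝ) × (ι₃ → ρ → ℝ))).IsAddHaarMeasure :=
    Measure.prod.instIsAddHaarMeasure _ _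
  have : (volume : Measure ((ι₁ → ρ → ℝ) × (ι₂ → ρ → ℝ) × (ι₃ → ρ → ℝ))).IsAddHaarMeasure :=
    Measure.prod.instIsAddHaarMeasure _ _
  obtain ⟨g, hg⟩ := Matrix.exists_rank_one_submatrix_eq_min ℝ (β := β) (ρ := ρ)
  obtain ⟨t₀, ht₀⟩ := exists_trilinearMonomialMatrix_map_eval_eq_one_submatrix hf g
  simp_rw [← trilinearMonomialMatrix_map_eval]
  exact Matrix.addHaar_setOf_rank_map_eval_ne_min volume _ _ t₀ (ht₀ ▸ hg)

section Phi

variable {I J K : ℕ}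

abbrev PhiIndex (I J K : ℕ) :=
  (Fin (J - 1) × Fin (I - 1)) ⊕
    ((Fin (K - 1) × Fin (J - 1)) ⊕ ((Fin (K - 1) × Fin (I - 1)) ⊕
      (Fin (K - 1) × Fin (J - 1) × Fin (I - 1))))

theorem card_phiIndex (hI : 2 ≤ I) (hJ : 2 ≤ J) (hK : 2 ≤ K) :
    Fintype.card (PhiIndex I J K) = I * J * K - I - J - K + 2 := by
  obtain ⟨a, rfl⟩ : ∃ a, I = a + 2 := ⟨I - 2, by omega⟩
  obtain ⟨b, rfl⟩ : ∃ b, J = b + 2 := ⟨J - 2, by omega⟩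
  obtain ⟨c, rfl⟩ : ∃ c, K = c + 2 := ⟨K - 2, by omega⟩
  simp only [Fintype.card_sum, Fintype.card_prod, Fintype.card_fin, Nat.add_succ_sub_one]
  have key : (a + 2) * (b + 2) * (c + 2) =
      (b + 1) * (a + 1) + ((c + 1) * (b + 1) + ((c + 1) * (a + 1) +
        (c + 1) * ((b + 1) * (a + 1)))) + (a + b + c + 4) := by ring
  have : 0 < (b + 1) * (a + 1) := by positivity
  have : 0 < (c + 1) * (b + 1) := by positivity
  omega

variable (hI : 2 ≤ I) (hJ : 2 ≤ J) (hK : 2 ≤ K)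

def phiMonomial : PhiIndex I J K → Fin I × Fin J × Fin K
  | .inl (j, i) => (⟨i + 1, by omega⟩, ⟨j + 1, by omega⟩, ⟨0, by omega⟩)
  | .inr (.inl (k, j)) => (⟨0, by omega⟩, ⟨j + 1, by omega⟩, ⟨k + 1, by omega⟩)
  | .inr (.inr (.inl (k, i))) => (⟨i + 1, by omega⟩, ⟨0, by omega⟩, ⟨k + 1, by omega⟩)
  | .inr (.inr (.inr (k, j, i))) => (⟨i + 1, by omega⟩, ⟨j + 1, by omega⟩, ⟨k + 1, by omega⟩)

theorem phiMonomial_injective : Function.Injective (phiMonomial hI hJ hK) := by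
  rintro (⟨j, i⟩ | ⟨k, j⟩ | ⟨k, i⟩ | ⟨k, j, i⟩) (⟨j', i'⟩ | ⟨k', j'⟩ | ⟨k', i'⟩ | ⟨k', j', i'⟩) h
    <;> simp_all [phiMonomial, Fin.ext_iff]

theorem phiMap_eq_phiMonomial (x : Fin I → ℝ) (y : Fin J → ℝ) (z : Fin K → ℝ)
    (b : PhiIndex I J K) :
    PhiMap I J K hI hJ hK x y z b =
      x (phiMonomial hI hJ hK b).1 * y (phiMonomial hI hJ hK b).2.1 *
        z (phiMonomial hI hJ hK b).2.2 := by
  rcases b with ⟨j, i⟩ | ⟨k, j⟩ | ⟨k, i⟩ | ⟨k, j, i⟩ <;> simp only [PhiMap, phiMonomial] <;> ring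

end Phi

theorem phi_matrix_generic_rank_general (I J K R : ℕ)
    (hI : 2 ≤ I) (hJ : 2 ≤ J) (hK : 2 ≤ K) :
    MeasureTheory.volume
      {t : (Fin I → Fin R → ℝ) × (Fin J → Fin R → ℝ) × (Fin K → Fin R → ℝ) |
        (Matrix.of fun idx r =>
            PhiMap I J K hI hJ hK (fun i => t.1 i r) (fun j => t.2.1 j r)
              (fun k => t.2.2 k r) idx).rank
          ≠ min (I * J * K - I - J - K + 2) R} = 0 := by
  have : Nonempty (PhiIndex I J K) := ⟨.inl (⟨0, by omega⟩, ⟨0, by omega⟩)⟩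
  have h := volume_setOf_rank_trilinearMonomial_ne_min (ρ := Fin R)
    (phiMonomial_injective hI hJ hK)
  rw [card_phiIndex hI hJ hK, Fintype.card_fin] at h
  simpa only [phiMap_eq_phiMonomial] using h

/-- for generic matrices `X ∈ ℝ^{I×R}`, `Y ∈ ℝ^{J×R}`, `Z ∈ ℝ^{K×R}` with
columns `x_r, y_r, z_r`, the `ℓ × R` matrix `[Φ(x₁,y₁,z₁), …, Φ(x_R,y_R,z_R)]`
(`ℓ = IJK - I - J - K + 2`) has rank `min ℓ R`: the set of triples `(X, Y, Z)` where
this fails has Lebesgue measure zero. -/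
theorem phi_matrix_generic_rank (I J K R : ℕ)
    (hI : 2 ≤ I) (hJ : 2 ≤ J) (hK : 2 ≤ K) (hR : 0 < R) :
    MeasureTheory.volume
      {t : (Fin I → Fin R → ℝ) × (Fin J → Fin R → ℝ) × (Fin K → Fin R → ℝ) |
        (Matrix.of fun idx r =>
            PhiMap I J K hI hJ hK (fun i => t.1 i r) (fun j => t.2.1 j r)
              (fun k => t.2.2 k r) idx).rank
          ≠ min (I * J * K - I - J - K + 2) R} = 0 :=
  phi_matrix_generic_rank_general I J K R hI hJ hK
end

section
/- Let I, J ≥ 2 and for j = 1, …, I+J−2 let U_j ∈ ℝ^{I×J} be a matrix whose (1,1) entry is zero, written in block form U_j = [[0, ψ_j^⊤], [φ_j, Û_j]] with φ_j ∈ ℝ^{I−1}, ψ_j ∈ ℝ^{J−1}, Û_j ∈ ℝ^{(I−1)×(J−1)}. Let c_x ∈ ℝ^I, c_y ∈ ℝ^J, and let P : ℝ^I × ℝ^J → ℝ^{I+J} be the map whose first I+J−2 components are p_j(x, y) = x^⊤ U_j y and whose last two components are c_x^⊤ x − 1 and c_y^⊤ y − 1. Then (e₁, e₁) (where e₁ denotes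 the first standard basis vector of ℝ^I, respectively ℝ^J) is a zero of the first I+J−2 components of P, and the Jacobian matrix DP(e₁, e₁) ∈ ℝ^{(I+J)×(I+J)} is invertible if and only if the first entry of c_x is nonzero, the first entry of c_y is nonzero, and the (I+J−2)×(I+J−2) matrix Φ whose j-th row is [φ_j^⊤, ψ_j^⊤] is invertible. -/
open Matrix

/-- The Jacobian matrix of the map `P(x, y) = (xᵀU_j y (j = 1,…,I+J-2), cxᵀx - 1, cyᵀy - 1)`
at the point `(x0, y0)`, built from the formulas `∂p_j/∂x = U_j y`, `∂p_j/∂y = U_jᵀ x`.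
Rows are indexed by the `I+J-2` bilinear components plus the two affine components;
columns by the `x`-variables (`Fin I`) and the `y`-variables (`Fin J`). -/
def jacobianP (I J : ℕ) (U : Fin (I + J - 2) → Matrix (Fin I) (Fin J) ℝ)
    (cx : Fin I → ℝ) (cy : Fin J → ℝ) (x0 : Fin I → ℝ) (y0 : Fin J → ℝ) :
    Matrix (Fin (I + J - 2) ⊕ (Unit ⊕ Unit)) (Fin I ⊕ Fin J) ℝ :=
  Matrix.of fun r c =>
    match r, c with
    | Sum.inl j, Sum.inl i => (U j).mulVec y0 i
    | Sum.inl j, Sum.inr k => (U j)ᵀ.mulVec x0 k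
    | Sum.inr (Sum.inl _), Sum.inl i => cx i
    | Sum.inr (Sum.inl _), Sum.inr _ => 0
    | Sum.inr (Sum.inr _), Sum.inl _ => 0
    | Sum.inr (Sum.inr _), Sum.inr k => cy k

lemma aux_sum_split {n : ℕ} (hn : 0 < n) (f : Fin n → ℝ) :
    ∑ i, f i = f ⟨0, hn⟩ + ∑ i : Fin (n-1), f ⟨i.val+1, by omega⟩ := by
  obtain ⟨m, rfl⟩ : ∃ m, n = m + 1 := ⟨n-1, by omega⟩
  rw [Fin.sum_univ_succ]
  rfl

lemma aux_sum_ind_r {n : ℕ} (hn : 0 < n) (f : Fin n → ℝ) :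
    ∑ k : Fin n, f k * (if (k : ℕ) = 0 then (1:ℝ) else 0) = f ⟨0, hn⟩ := by
  rw [Finset.sum_eq_single ⟨0, hn⟩]
  · simp
  · intro b _ hb
    have : (b:ℕ) ≠ 0 := fun h => hb (Fin.ext h)
    simp [this]
  · simp

lemma aux_sum_ind_l {n : ℕ} (hn : 0 < n) (f : Fin n → ℝ) :
    ∑ k : Fin n, (if (k : ℕ) = 0 then (1:ℝ) else 0) * f k = f ⟨0, hn⟩ := by
  rw [← aux_sum_ind_r hn f]
  exact Finset.sum_congr rfl fun k _ => mul_comm _ _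

/-- the shifted vector -/
def shiftv (I J : ℕ) (v : Fin I ⊕ Fin J → ℝ) : Fin (I-1) ⊕ Fin (J-1) → ℝ :=
  Sum.elim (fun i => v (Sum.inl ⟨i.val+1, by have := i.isLt; omega⟩))
    (fun k => v (Sum.inr ⟨k.val+1, by have := k.isLt; omega⟩))

/-- let `U_j ∈ ℝ^{I×J}` (`j = 1,…,I+J-2`) have vanishing `(1,1)` entry and
block form `[[0, ψ_jᵀ], [φ_j, Û_j]]`.  Then `(e₁, e₁)` zeroes the first `I+J-2`
components of `P`, and the Jacobian `DP(e₁, e₁)` is invertible iff `(c_x)₁ ≠ 0`,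
`(c_y)₁ ≠ 0`, and the `(I+J-2) × (I+J-2)` matrix `Φ` with rows `[φ_jᵀ, ψ_jᵀ]` is
invertible.  (Invertibility of a square-sized matrix is expressed as bijectivity of
the induced linear map.) -/
theorem jacobian_invertible_iff (I J : ℕ) (hI : 2 ≤ I) (hJ : 2 ≤ J)
    (φ : Fin (I + J - 2) → Fin (I - 1) → ℝ) (ψ : Fin (I + J - 2) → Fin (J - 1) → ℝ)
    (Uh : Fin (I + J - 2) → Matrix (Fin (I - 1)) (Fin (J - 1)) ℝ)
    (U : Fin (I + J - 2) → Matrix (Fin I) (Fin J) ℝ)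
    (hU00 : ∀ j, U j ⟨0, by omega⟩ ⟨0, by omega⟩ = 0)
    (hUφ : ∀ j (i : Fin (I - 1)),
      U j ⟨i.val + 1, by have := i.isLt; omega⟩ ⟨0, by omega⟩ = φ j i)
    (hUψ : ∀ j (k : Fin (J - 1)),
      U j ⟨0, by omega⟩ ⟨k.val + 1, by have := k.isLt; omega⟩ = ψ j k)
    (hUh : ∀ j (i : Fin (I - 1)) (k : Fin (J - 1)),
      U j ⟨i.val + 1, by have := i.isLt; omega⟩ ⟨k.val + 1, by have := k.isLt; omega⟩
        = Uh j i k)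
    (cx : Fin I → ℝ) (cy : Fin J → ℝ)
    (ex : Fin I → ℝ) (hex : ex = fun i => if i.val = 0 then 1 else 0)
    (ey : Fin J → ℝ) (hey : ey = fun j => if j.val = 0 then 1 else 0) :
    (∀ j, ex ⬝ᵥ (U j).mulVec ey = 0) ∧
      (Function.Bijective (Matrix.mulVecLin (jacobianP I J U cx cy ex ey)) ↔
        (cx ⟨0, by omega⟩ ≠ 0 ∧ cy ⟨0, by omega⟩ ≠ 0 ∧
          Function.Bijective (Matrix.mulVecLin
            (Matrix.of fun (j : Fin (I + J - 2)) (c : Fin (I - 1) ⊕ Fin (J - 1)) =>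
              Sum.elim (φ j) (ψ j) c)))) := by
  subst hex hey
  have hI0 : 0 < I := by omega
  have hJ0 : 0 < J := by omega
  set ex : Fin I → ℝ := fun i => if i.val = 0 then 1 else 0 with hex
  set ey : Fin J → ℝ := fun j => if j.val = 0 then 1 else 0 with hey
  set M := jacobianP I J U cx cy ex ey with hM
  set Φm : Matrix (Fin (I + J - 2)) (Fin (I - 1) ⊕ Fin (J - 1)) ℝ :=
    Matrix.of fun j c => Sum.elim (φ j) (ψ j) c with hΦm
  -- entries of the Jacobian
  have hMy : ∀ j i, (U j).mulVec ey i = U j i ⟨0, hJ0⟩ := by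
    intro j i
    simp only [Matrix.mulVec, dotProduct, hey]
    exact aux_sum_ind_r hJ0 (fun k => U j i k)
  have hMx : ∀ j k, (U j)ᵀ.mulVec ex k = U j ⟨0, hI0⟩ k := by
    intro j k
    simp only [Matrix.mulVec, dotProduct, hex, Matrix.transpose_apply]
    exact aux_sum_ind_r hI0 (fun i => U j ⟨i, i.isLt⟩ k)
  -- the key row computation
  have hrow : ∀ (v : Fin I ⊕ Fin J → ℝ) j,
      M.mulVec v (Sum.inl j) = Φm.mulVec (shiftv I J v) j := by
    intro v j
    simp only [Matrix.mulVec, dotProduct, Fintype.sum_sum_type]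
    have h1 : ∑ i : Fin I, M (Sum.inl j) (Sum.inl i) * v (Sum.inl i)
        = ∑ i : Fin (I-1), φ j i * shiftv I J v (Sum.inl i) := by
      rw [aux_sum_split hI0 (fun i => M (Sum.inl j) (Sum.inl i) * v (Sum.inl i))]
      have h0 : M (Sum.inl j) (Sum.inl ⟨0, hI0⟩) = 0 := by
        show (U j).mulVec ey ⟨0, hI0⟩ = 0
        rw [hMy]; exact hU00 j
      rw [h0, zero_mul, zero_add]
      refine Finset.sum_congr rfl fun i _ => ?_
      have : M (Sum.inl j) (Sum.inl ⟨i.val+1, by have := i.isLt; omega⟩) = φ j i := by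
        show (U j).mulVec ey ⟨i.val+1, by have := i.isLt; omega⟩ = φ j i
        rw [hMy]; exact hUφ j i
      rw [this]; rfl
    have h2 : ∑ k : Fin J, M (Sum.inl j) (Sum.inr k) * v (Sum.inr k)
        = ∑ k : Fin (J-1), ψ j k * shiftv I J v (Sum.inr k) := by
      rw [aux_sum_split hJ0 (fun k => M (Sum.inl j) (Sum.inr k) * v (Sum.inr k))]
      have h0 : M (Sum.inl j) (Sum.inr ⟨0, hJ0⟩) = 0 := by
        show (U j)ᵀ.mulVec ex ⟨0, hJ0⟩ = 0
        rw [hMx]; exact hU00 j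
      rw [h0, zero_mul, zero_add]
      refine Finset.sum_congr rfl fun k _ => ?_
      have : M (Sum.inl j) (Sum.inr ⟨k.val+1, by have := k.isLt; omega⟩) = ψ j k := by
        show (U j)ᵀ.mulVec ex ⟨k.val+1, by have := k.isLt; omega⟩ = ψ j k
        rw [hMx]; exact hUψ j k
      rw [this]; rfl
    rw [h1, h2]
    rfl
  have hrowx : ∀ (v : Fin I ⊕ Fin J → ℝ),
      M.mulVec v (Sum.inr (Sum.inl ())) = ∑ i : Fin I, cx i * v (Sum.inl i) := by
    intro v
    simp only [Matrix.mulVec, dotProduct, Fintype.sum_sum_type]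
    have : ∑ k : Fin J, M (Sum.inr (Sum.inl ())) (Sum.inr k) * v (Sum.inr k) = 0 := by
      refine Finset.sum_eq_zero fun k _ => ?_
      show (0:ℝ) * v (Sum.inr k) = 0
      rw [zero_mul]
    rw [this, add_zero]
    rfl
  have hrowy : ∀ (v : Fin I ⊕ Fin J → ℝ),
      M.mulVec v (Sum.inr (Sum.inr ())) = ∑ k : Fin J, cy k * v (Sum.inr k) := by
    intro v
    simp only [Matrix.mulVec, dotProduct, Fintype.sum_sum_type]
    have : ∑ i : Fin I, M (Sum.inr (Sum.inr ())) (Sum.inl i) * v (Sum.inl i) = 0 := by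
      refine Finset.sum_eq_zero fun i _ => ?_
      show (0:ℝ) * v (Sum.inl i) = 0
      rw [zero_mul]
    rw [this, zero_add]
    rfl
  -- dimension counts
  have hdimM : Module.finrank ℝ ((Fin I ⊕ Fin J) → ℝ)
      = Module.finrank ℝ ((Fin (I + J - 2) ⊕ (Unit ⊕ Unit)) → ℝ) := by
    simp only [Module.finrank_fintype_fun_eq_card, Fintype.card_sum, Fintype.card_fin,
      Fintype.card_unit]
    omega
  have hdimΦ : Module.finrank ℝ ((Fin (I-1) ⊕ Fin (J-1)) → ℝ)
      = Module.finrank ℝ (Fin (I + J - 2) → ℝ) := by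
    simp only [Module.finrank_fintype_fun_eq_card, Fintype.card_sum, Fintype.card_fin]
    omega
  constructor
  · intro j
    simp only [dotProduct, hex]
    rw [aux_sum_ind_l hI0 (fun i => (U j).mulVec ey i), hMy]
    exact hU00 j
  · constructor
    · intro hbij
      have hinj := hbij.injective
      refine ⟨?_, ?_, ?_⟩
      · -- cx₀ ≠ 0
        intro h0
        set v : Fin I ⊕ Fin J → ℝ := fun c => if c = Sum.inl ⟨0, hI0⟩ then 1 else 0 with hv
        have hMv : M.mulVecLin v = M.mulVecLin 0 := by
          rw [map_zero]
          funext r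
          have : M.mulVec v r = M r (Sum.inl ⟨0, hI0⟩) := by
            simp only [Matrix.mulVec, dotProduct, hv]
            rw [Finset.sum_eq_single (Sum.inl ⟨0, hI0⟩)] <;> simp +contextual
          rw [Matrix.mulVecLin_apply, this]
          match r with
          | Sum.inl j => show (U j).mulVec ey ⟨0, hI0⟩ = _; rw [hMy, hU00]; rfl
          | Sum.inr (Sum.inl _) => exact h0
          | Sum.inr (Sum.inr _) => rfl
        have := congrFun (hinj hMv) (Sum.inl ⟨0, hI0⟩)
        simp [hv] at this
      · -- cy₀ ≠ 0
        intro h0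
        set v : Fin I ⊕ Fin J → ℝ := fun c => if c = Sum.inr ⟨0, hJ0⟩ then 1 else 0 with hv
        have hMv : M.mulVecLin v = M.mulVecLin 0 := by
          rw [map_zero]
          funext r
          have : M.mulVec v r = M r (Sum.inr ⟨0, hJ0⟩) := by
            simp only [Matrix.mulVec, dotProduct, hv]
            rw [Finset.sum_eq_single (Sum.inr ⟨0, hJ0⟩)] <;> simp +contextual
          rw [Matrix.mulVecLin_apply, this]
          match r with
          | Sum.inl j => show (U j)ᵀ.mulVec ex ⟨0, hJ0⟩ = _; rw [hMx, hU00]; rfl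
          | Sum.inr (Sum.inl _) => rfl
          | Sum.inr (Sum.inr _) => exact h0
        have := congrFun (hinj hMv) (Sum.inr ⟨0, hJ0⟩)
        simp [hv] at this
      · -- Φ bijective
        have hsurj : Function.Surjective Φm.mulVecLin := by
          intro u
          obtain ⟨v, hv⟩ := hbij.surjective (Sum.elim u (Sum.elim (fun _ => 0) (fun _ => 0)))
          refine ⟨shiftv I J v, funext fun j => ?_⟩
          rw [Matrix.mulVecLin_apply, ← hrow]
          have := congrFun hv (Sum.inl j)
          rw [Matrix.mulVecLin_apply] at this
          exact this
        exact ⟨(LinearMap.injective_iff_surjective_of_finrank_eq_finrank hdimΦ).mpr hsurj,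
          hsurj⟩
    · rintro ⟨hx, hy, hΦ⟩
      have hinj : Function.Injective M.mulVecLin := by
        rw [injective_iff_map_eq_zero]
        intro v hv
        have hsh : shiftv I J v = 0 := by
          apply hΦ.injective
          rw [map_zero]
          funext j
          rw [Matrix.mulVecLin_apply, ← hrow]
          exact congrFun hv (Sum.inl j)
        have hshl : ∀ i : Fin (I-1), v (Sum.inl ⟨i.val+1, by have := i.isLt; omega⟩) = 0 :=
          fun i => congrFun hsh (Sum.inl i)
        have hshr : ∀ k : Fin (J-1), v (Sum.inr ⟨k.val+1, by have := k.isLt; omega⟩) = 0 :=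
          fun k => congrFun hsh (Sum.inr k)
        have hx0 : v (Sum.inl ⟨0, hI0⟩) = 0 := by
          have h := congrFun hv (Sum.inr (Sum.inl ()))
          rw [Matrix.mulVecLin_apply, hrowx] at h
          rw [aux_sum_split hI0 (fun i => cx i * v (Sum.inl i))] at h
          simp only [hshl, mul_zero, Finset.sum_const_zero, add_zero] at h
          exact (mul_eq_zero.mp h).resolve_left hx
        have hy0 : v (Sum.inr ⟨0, hJ0⟩) = 0 := by
          have h := congrFun hv (Sum.inr (Sum.inr ()))
          rw [Matrix.mulVecLin_apply, hrowy] at h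
          rw [aux_sum_split hJ0 (fun k => cy k * v (Sum.inr k))] at h
          simp only [hshr, mul_zero, Finset.sum_const_zero, add_zero] at h
          exact (mul_eq_zero.mp h).resolve_left hy
        funext c
        match c with
        | Sum.inl i =>
          by_cases h : i.val = 0
          · have : i = ⟨0, hI0⟩ := Fin.ext h
            rw [this]; exact hx0
          · have hi : i = ⟨(i.val - 1) + 1, by have := i.isLt; omega⟩ := Fin.ext (show i.val = i.val - 1 + 1 by omega)
            rw [hi]
            exact hshl ⟨i.val - 1, by have := i.isLt; omega⟩
        | Sum.inr k =>
          by_cases h : k.val = 0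
          · have : k = ⟨0, hJ0⟩ := Fin.ext h
            rw [this]; exact hy0
          · have hk : k = ⟨(k.val - 1) + 1, by have := k.isLt; omega⟩ := Fin.ext (show k.val = k.val - 1 + 1 by omega)
            rw [hk]
            exact hshr ⟨k.val - 1, by have := k.isLt; omega⟩
      exact ⟨hinj,
        (LinearMap.injective_iff_surjective_of_finrank_eq_finrank hdimM).mp hinj⟩
end

section
/- Let A ∈ ℝ^{I×J×K} be a third-order tensor with rank(A) = R, where R = R* = IJ − I − J + 2 and R ≤ K, and suppose its matricization T ∈ ℝ^{IJ×K} (with T_{(j−1)I+i,k} = A_{ijk}) has rank R. Let T = E F^⊤ be a full rank factorization with E ∈ ℝ^{IJ×R}, F ∈ ℝ^{K×R} of full column rank, let {u₁, …, u_{I+J−2}} be a basis of N(E^⊤) with U_j = vec⁻¹(u_j) ∈ ℝ^{I×J}, let c_x ∈ ℝ^I, c_y ∈ ℝ^J, and let P : ℝ^I × ℝ^J → ℝ^{I+J} have components x^⊤ U_j y (j = 1, …, I+J−2), c_x^⊤ x − 1 and c_y^⊤ y − 1. Suppose the real solution set S = {(x, y) ∈ ℝ^I × ℝ^J : P(x,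 y) = 0} is finite, with s elements, and suppose that for every decomposition A = Σ_{r=1}^R x_r ∘ y_r ∘ z_r into R real rank-one tensors one has c_x^⊤ x_r ≠ 0 and c_y^⊤ y_r ≠ 0 for all r. Then A has only finitely many CP decompositions: the set of multisets {T₁, …, T_R} of R rank-one tensors in ℝ^{I×J×K} with T₁ + ⋯ + T_R = A has cardinality at most s! / (R!(s−R)!). -/
open Matrix

/-- `B` is a rank-one third-order tensor: `B = x ∘ y ∘ z` for nonzero vectors. -/
def RankOneTensor {I J K : ℕ} (B : Fin I → Fin J → Fin K → ℝ) : Prop :=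
  ∃ (x : Fin I → ℝ) (y : Fin J → ℝ) (z : Fin K → ℝ),
    x ≠ 0 ∧ y ≠ 0 ∧ z ≠ 0 ∧ ∀ i j k, B i j k = x i * y j * z k

/-- `A` is a sum of `R` rank-one terms `x_r ∘ y_r ∘ z_r`. -/
def HasCPDecompOfLength {I J K : ℕ} (A : Fin I → Fin J → Fin K → ℝ) (R : ℕ) : Prop :=
  ∃ (x : Fin R → Fin I → ℝ) (y : Fin R → Fin J → ℝ) (z : Fin R → Fin K → ℝ),
    ∀ i j k, A i j k = ∑ r, x r i * y r j * z r k

/-- The rank of a third-order tensor: the minimal number of rank-one tensors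
summing to it. -/
noncomputable def tensorRank {I J K : ℕ} (A : Fin I → Fin J → Fin K → ℝ) : ℕ :=
  sInf {R | HasCPDecompOfLength A R}

/-- The CP decompositions of `A` of length `R`, regarded as multisets of `R`
rank-one tensors summing to `A` (i.e. decompositions up to permutation of the
summands). -/
def cpDecompositions {I J K : ℕ} (A : Fin I → Fin J → Fin K → ℝ) (R : ℕ) :
    Set (Multiset (Fin I → Fin J → Fin K → ℝ)) :=
  {D | Multiset.card D = R ∧ (∀ B ∈ D, RankOneTensor B) ∧ D.sum = A}

private lemma multiset_eq_map_univ {α : Type*} {R : ℕ} (D : Multiset α)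
    (h : Multiset.card D = R) :
    ∃ B : Fin R → α, D = Multiset.map B Finset.univ.val := by
  have hlen : D.toList.length = R := by rw [Multiset.length_toList, h]
  refine ⟨fun r => D.toList.get (Fin.cast hlen.symm r), ?_⟩
  conv_lhs => rw [← Multiset.coe_toList D]
  rw [Fin.univ_val_map, ← List.ofFn_congr hlen, List.ofFn_get]

private lemma indep_and_span {m : Type*} [Fintype m] {K R : ℕ}
    (T : Matrix m (Fin K) ℝ) (W : Fin R → m → ℝ) (Z : Fin R → Fin K → ℝ)
    (hTW : ∀ q k, T q k = ∑ r, W r q * Z r k) (hr : T.rank = R) :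
    LinearIndependent ℝ W ∧
      Submodule.span ℝ (Set.range W) = LinearMap.range T.mulVecLin := by
  have hle : LinearMap.range T.mulVecLin ≤ Submodule.span ℝ (Set.range W) := by
    rintro w ⟨v, rfl⟩
    have hv : T.mulVecLin v = ∑ r, (Z r ⬝ᵥ v) • W r := by
      funext q
      simp only [Matrix.mulVecLin_apply, Matrix.mulVec, dotProduct, hTW,
        Finset.sum_apply, Pi.smul_apply, smul_eq_mul, Finset.sum_mul]
      rw [Finset.sum_comm]
      refine Finset.sum_congr rfl fun r _ => ?_
      exact Finset.sum_congr rfl fun k _ => by ring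
    rw [hv]
    exact Submodule.sum_mem _ fun r _ =>
      Submodule.smul_mem _ _ (Submodule.subset_span ⟨r, rfl⟩)
  have hfr : Module.finrank ℝ (LinearMap.range T.mulVecLin) = R := hr
  have hs2 : Module.finrank ℝ (Submodule.span ℝ (Set.range W)) ≤ R := by
    simpa [Set.finrank] using finrank_range_le_card W
  have heq : LinearMap.range T.mulVecLin = Submodule.span ℝ (Set.range W) :=
    Submodule.eq_of_le_of_finrank_le hle (by rw [hfr]; exact hs2)
  refine ⟨?_, heq.symm⟩
  rw [linearIndependent_iff_card_eq_finrank_span, Set.finrank, ← heq, hfr, Fintype.card_fin]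

/-- Theorem 3.5: let `A ∈ ℝ^{I×J×K}` have rank `R = R* = IJ-I-J+2 ≤ K`,
matricization `T` (with `T (j,i) k = A i j k`, rows indexed by `(j,i) : Fin J × Fin I`,
position `(j-1)I+i`) of rank `R`, full rank factorization `T = E Fᵀ`, a basis
`u₁,…,u_{I+J-2}` of `N(Eᵀ)` with `U_j = vec⁻¹(u_j)`, and random normalizations
`c_x, c_y`.  If the real solution set `S` of the square system `P(x,y) = 0` is finite
with `s` elements, and every length-`R` rank-one decomposition of `A` has factors with
`c_xᵀ x_r ≠ 0`, `c_yᵀ y_r ≠ 0`, then `A` has only finitely many CP decompositions;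
in fact at most `s! / (R!(s-R)!)` of them. -/
theorem finitely_many_cp_decompositions (I J K R : ℕ)
    (A : Fin I → Fin J → Fin K → ℝ)
    (hRstar : R = I * J - I - J + 2) (hRK : R ≤ K)
    (hrank : tensorRank A = R)
    (T : Matrix (Fin J × Fin I) (Fin K) ℝ)
    (hT : ∀ i j k, T (j, i) k = A i j k)
    (hTrank : T.rank = R)
    (E : Matrix (Fin J × Fin I) (Fin R) ℝ) (F : Matrix (Fin K) (Fin R) ℝ)
    (hEF : T = E * Fᵀ) (hErank : E.rank = R) (hFrank : F.rank = R)
    (u : Fin (I + J - 2) → (Fin J × Fin I → ℝ))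
    (hindep : LinearIndependent ℝ u)
    (hspan : Submodule.span ℝ (Set.range u) = LinearMap.ker (Matrix.mulVecLin Eᵀ))
    (U : Fin (I + J - 2) → Matrix (Fin I) (Fin J) ℝ)
    (hU : ∀ m i j, U m i j = u m (j, i))
    (cx : Fin I → ℝ) (cy : Fin J → ℝ)
    (S : Set ((Fin I → ℝ) × (Fin J → ℝ)))
    (hS : S = {p | (∀ m, p.1 ⬝ᵥ (U m).mulVec p.2 = 0) ∧ cx ⬝ᵥ p.1 = 1 ∧ cy ⬝ᵥ p.2 = 1})
    (hSfin : S.Finite) (s : ℕ) (hs : S.ncard = s)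
    (hnondeg : ∀ (x : Fin R → Fin I → ℝ) (y : Fin R → Fin J → ℝ) (z : Fin R → Fin K → ℝ),
      (∀ r, x r ≠ 0 ∧ y r ≠ 0 ∧ z r ≠ 0) →
      (∀ i j k, A i j k = ∑ r, x r i * y r j * z r k) →
      ∀ r, cx ⬝ᵥ x r ≠ 0 ∧ cy ⬝ᵥ y r ≠ 0) :
    (cpDecompositions A R).Finite ∧
      (cpDecompositions A R).ncard ≤ s.factorial / (R.factorial * (s - R).factorial) := by
  classical
  -- canonical data for each decomposition
  have key : ∀ D ∈ cpDecompositions A R,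
      ∃ (p : Fin R → ((Fin I → ℝ) × (Fin J → ℝ))) (Z : Fin R → Fin K → ℝ),
        (∀ r, p r ∈ S) ∧ Function.Injective p ∧
        LinearIndependent ℝ (fun r (q : Fin J × Fin I) => (p r).1 q.2 * (p r).2 q.1) ∧
        (∀ i j k, A i j k = ∑ r, (p r).1 i * (p r).2 j * Z r k) ∧
        D = Multiset.map (fun r => fun i j k => (p r).1 i * (p r).2 j * Z r k)
          Finset.univ.val := by
    rintro D ⟨hcard, hrk1, hsum⟩
    obtain ⟨B, hB⟩ := multiset_eq_map_univ D hcard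
    have hBmem : ∀ r, B r ∈ D := by
      intro r
      rw [hB]
      exact Multiset.mem_map_of_mem _ (Finset.mem_univ r)
    choose x y z hx hy hz hxyz using fun r => hrk1 (B r) (hBmem r)
    have hA : ∀ i j k, A i j k = ∑ r, x r i * y r j * z r k := by
      intro i j k
      have hAs : A = ∑ r, B r := by
        rw [← hsum, hB]; rfl
      rw [hAs]
      simp only [Finset.sum_apply]
      exact Finset.sum_congr rfl fun r _ => hxyz r i j k
    have hnz : ∀ r, x r ≠ 0 ∧ y r ≠ 0 ∧ z r ≠ 0 := fun r => ⟨hx r, hy r, hz r⟩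
    have hc := hnondeg x y z hnz hA
    set p : Fin R → ((Fin I → ℝ) × (Fin J → ℝ)) :=
      fun r => ((cx ⬝ᵥ x r)⁻¹ • x r, (cy ⬝ᵥ y r)⁻¹ • y r) with hp
    set Z : Fin R → Fin K → ℝ := fun r => ((cx ⬝ᵥ x r) * (cy ⬝ᵥ y r)) • z r with hZ
    set W : Fin R → (Fin J × Fin I) → ℝ := fun r q => (p r).1 q.2 * (p r).2 q.1 with hW
    have hterm : ∀ r i j k, (p r).1 i * (p r).2 j * Z r k = x r i * y r j * z r k := by
      intro r i j k
      have ha := (hc r).1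
      have hb := (hc r).2
      simp only [hp, hZ, Pi.smul_apply, smul_eq_mul]
      field_simp
    have hA' : ∀ i j k, A i j k = ∑ r, (p r).1 i * (p r).2 j * Z r k := by
      intro i j k
      rw [hA i j k]
      exact (Finset.sum_congr rfl fun r _ => hterm r i j k).symm
    have hTW : ∀ q k, T q k = ∑ r, W r q * Z r k := by
      intro q k
      have h1 := hT q.2 q.1 k
      rw [Prod.mk.eta] at h1
      rw [h1, hA' q.2 q.1 k]
    obtain ⟨hindW, hspanW⟩ := indep_and_span T W Z hTW hTrank
    have hnorm1 : ∀ r, cx ⬝ᵥ (p r).1 = 1 := by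
      intro r
      simp only [hp, dotProduct_smul, smul_eq_mul]
      exact inv_mul_cancel₀ (hc r).1
    have hnorm2 : ∀ r, cy ⬝ᵥ (p r).2 = 1 := by
      intro r
      simp only [hp, dotProduct_smul, smul_eq_mul]
      exact inv_mul_cancel₀ (hc r).2
    have hWrange : ∀ r, W r ∈ LinearMap.range T.mulVecLin := by
      intro r
      rw [← hspanW]
      exact Submodule.subset_span ⟨r, rfl⟩
    have hdot : ∀ m' r, u m' ⬝ᵥ W r = 0 := by
      intro m' r
      obtain ⟨v, hv⟩ := hWrange r
      have hu0 : u m' ᵥ* E = 0 := by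
        have hm : u m' ∈ LinearMap.ker (Matrix.mulVecLin Eᵀ) :=
          hspan ▸ Submodule.subset_span (Set.mem_range_self m')
        simpa [Matrix.mulVecLin_apply, Matrix.mulVec_transpose] using hm
      rw [← hv, Matrix.mulVecLin_apply, hEF, ← Matrix.mulVec_mulVec,
        Matrix.dotProduct_mulVec, hu0, zero_dotProduct]
    have hpS : ∀ r, p r ∈ S := by
      intro r
      rw [hS]
      refine ⟨?_, hnorm1 r, hnorm2 r⟩
      intro m'
      have heq : (p r).1 ⬝ᵥ (U m').mulVec (p r).2 = u m' ⬝ᵥ W r := by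
        simp only [dotProduct, Matrix.mulVec, hW, Fintype.sum_prod_type,
          Finset.mul_sum]
        rw [Finset.sum_comm]
        refine Finset.sum_congr rfl fun j _ => Finset.sum_congr rfl fun i _ => ?_
        rw [hU m' i j]
        ring
      rw [heq]
      exact hdot m' r
    have hpInj : Function.Injective p := by
      intro r1 r2 h12
      exact hindW.injective (congrArg
        (fun (pr : (Fin I → ℝ) × (Fin J → ℝ)) (q : Fin J × Fin I) => pr.1 q.2 * pr.2 q.1) h12)
    exact ⟨p, Z, hpS, hpInj, hindW, hA', by
      rw [hB]
      exact Multiset.map_congr rfl fun r _ => funext fun i => funext fun j => funext fun k =>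
        (hxyz r i j k).trans (hterm r i j k).symm⟩
  choose! p Z hpS hpInj hpInd hAZ hDeq using key
  set f : Multiset (Fin I → Fin J → Fin K → ℝ) → Finset ((Fin I → ℝ) × (Fin J → ℝ)) :=
    fun D => Finset.image (p D) Finset.univ with hf
  set t : Set (Finset ((Fin I → ℝ) × (Fin J → ℝ))) :=
    {P | ↑P ⊆ S ∧ P.card = R} with ht
  have hmaps : ∀ D ∈ cpDecompositions A R, f D ∈ t := by
    intro D hD'
    constructor
    · intro q hq
      simp only [hf, Finset.coe_image, Set.mem_image] at hq
      obtain ⟨r, -, rfl⟩ := hq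
      exact hpS D hD' r
    · rw [hf]
      simp only
      rw [Finset.card_image_of_injective _ (hpInj D hD'), Finset.card_univ, Fintype.card_fin]
  have hinj : Set.InjOn f (cpDecompositions A R) := by
    intro D hD1 D' hD2 hff
    have himg : ∀ r', ∃ r, p D r = p D' r' := by
      intro r'
      have h1 : p D' r' ∈ Finset.image (p D) Finset.univ := by
        change p D' r' ∈ f D
        rw [hff]
        exact Finset.mem_image_of_mem _ (Finset.mem_univ r')
      simpa using h1
    choose σ0 hσ0 using himg
    have hσinj : Function.Injective σ0 := by
      intro a b hab
      exact hpInj D' hD2 (by rw [← hσ0 a, ← hσ0 b, hab])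
    have hσbij : Function.Bijective σ0 := Finite.injective_iff_bijective.mp hσinj
    set σ : Fin R ≃ Fin R := Equiv.ofBijective σ0 hσbij with hσ
    have hσap : ∀ r, σ r = σ0 r := fun r => rfl
    set WD : Fin R → (Fin J × Fin I) → ℝ :=
      fun r q => (p D r).1 q.2 * (p D r).2 q.1 with hWD
    have hZeq : ∀ r k, Z D (σ0 r) k = Z D' r k := by
      intro r0 k
      have hvec : ∑ tt, (Z D tt k - Z D' (σ.symm tt) k) • WD tt = 0 := by
        funext q
        simp only [Finset.sum_apply, Pi.smul_apply, smul_eq_mul, Pi.zero_apply, sub_mul]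
        rw [Finset.sum_sub_distrib]
        have h1 : ∑ tt, Z D tt k * WD tt q = A q.2 q.1 k := by
          rw [hAZ D hD1 q.2 q.1 k]
          exact Finset.sum_congr rfl fun r _ => by ring
        have h2 : ∑ tt, Z D' (σ.symm tt) k * WD tt q = A q.2 q.1 k := by
          rw [hAZ D' hD2 q.2 q.1 k]
          rw [← Equiv.sum_comp σ (fun tt => Z D' (σ.symm tt) k * WD tt q)]
          refine Finset.sum_congr rfl fun r _ => ?_
          rw [Equiv.symm_apply_apply]
          simp only [hWD, hσap r, hσ0 r]
          ring
        rw [h1, h2, sub_self]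
      have hcoef := Fintype.linearIndependent_iff.mp (hpInd D hD1)
        (fun tt => Z D tt k - Z D' (σ.symm tt) k) hvec (σ0 r0)
      rw [← hσap r0, Equiv.symm_apply_apply] at hcoef
      rw [← hσap r0]
      linarith
    rw [hDeq D hD1, hDeq D' hD2]
    have hBfun : (fun r => fun i j k => (p D' r).1 i * (p D' r).2 j * Z D' r k)
        = (fun r => fun i j k => (p D r).1 i * (p D r).2 j * Z D r k) ∘ σ0 := by
      funext r
      funext i j k
      simp only [Function.comp_apply, ← hσ0 r, ← hZeq r k]
    rw [hBfun, ← Multiset.map_map]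
    congr 1
    have h3 : Finset.map σ.toEmbedding Finset.univ = Finset.univ :=
      Finset.map_univ_equiv σ
    have h4 := congrArg Finset.val h3
    rw [Finset.map_val] at h4
    exact h4.symm
  -- counting
  have hteq : t = ↑(hSfin.toFinset.powersetCard R) := by
    ext P
    simp only [ht, Set.mem_setOf_eq, Finset.mem_coe, Finset.mem_powersetCard,
      Set.Finite.subset_toFinset]
  have htfin : t.Finite := by
    rw [hteq]; exact (hSfin.toFinset.powersetCard R).finite_toSet
  constructor
  · exact Set.Finite.of_finite_image
      (htfin.subset (Set.image_subset_iff.mpr hmaps)) hinj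
  · have h5 : (cpDecompositions A R).ncard ≤ t.ncard :=
      Set.ncard_le_ncard_of_injOn f hmaps hinj htfin
    have h6 : t.ncard = s.choose R := by
      rw [hteq, Set.ncard_coe_finset, Finset.card_powersetCard]
      congr 1
      rw [← hs]
      exact (Set.ncard_eq_toFinset_card S hSfin).symm
    have h7 : s.choose R ≤ s.factorial / (R.factorial * (s - R).factorial) := by
      rcases le_or_gt R s with h | h
      · rw [Nat.choose_eq_factorial_div_factorial h]
      · rw [Nat.choose_eq_zero_of_lt h]
        exact Nat.zero_le _
    omega
end
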